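/- Let G be a group, t ∈ G an element of infinite order whose cyclic subgroup ⟨t⟩ is normal and of finite index in G, and δ ∈ G with δ·t·δ⁻¹ = t⁻¹ ≠ t. If φ : G → K is a group homomorphism whose image φ(G) is infinite, then: φ(t) has infinite order, the subgroup ⟨φ(t)⟩ has finite index in φ(G), and φ(δ)·φ(t)·φ(δ)⁻¹ = φ(t)⁻¹ ≠ φ(t); in particular the image φ(G) is again a nontrivially twisted finite extension of ℤ. -/
import Mathlib


/-- Let `t ∈ G` have infinite order, with `⟨t⟩` normal and of finite index in
`G`, and let `δ ∈ G` satisfy `δ t δ⁻¹ = t⁻¹ ≠ t`. If `φ : G → K` has infinite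
image, then `φ t` has infinite order, `⟨φ t⟩` has finite index in the image
`φ(G)`, and `φ δ` inverts `φ t` by conjugation with `(φ t)⁻¹ ≠ φ t`; so the
image is again a nontrivially twisted finite extension of `ℤ`. -/
theorem image_is_twisted_extension
    (G K : Type*) [Group G] [Group K] (t : G) (ht : ¬IsOfFinOrder t)
    (hnormal : (Subgroup.zpowers t).Normal)
    (hindex : (Subgroup.zpowers t).index ≠ 0)
    (δ : G) (hδ : δ * t * δ⁻¹ = t⁻¹) (hne : t⁻¹ ≠ t)
    (φ : G →* K) (hinf : (Set.range φ).Infinite) :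
    ¬IsOfFinOrder (φ t) ∧
    ((Subgroup.zpowers (φ t)).subgroupOf φ.range).index ≠ 0 ∧
    φ δ * φ t * (φ δ)⁻¹ = (φ t)⁻¹ ∧ (φ t)⁻¹ ≠ φ t := by
  haveI : (Subgroup.zpowers t).FiniteIndex := ⟨hindex⟩
  -- φ t has infinite order
  have hfo : ¬IsOfFinOrder (φ t) := by
    intro h
    have hz : (Subgroup.zpowers (φ t) : Set K).Finite := by
      have : Finite (Subgroup.zpowers (φ t)) := h.finite_zpowers
      exact Set.toFinite _
    apply hinf
    have hfin2 : Finite ((G ⧸ Subgroup.zpowers t) × (Subgroup.zpowers (φ t))) := by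
      have : Finite (Subgroup.zpowers (φ t)) := h.finite_zpowers
      infer_instance
    have : Set.range φ ⊆ Set.range (fun p : (G ⧸ Subgroup.zpowers t) ×
        (Subgroup.zpowers (φ t)) => φ p.1.out * (p.2 : K)) := by
      rintro _ ⟨g, rfl⟩
      obtain ⟨h', hh'⟩ := QuotientGroup.mk_out_eq_mul (Subgroup.zpowers t) g
      refine ⟨⟨QuotientGroup.mk g, ⟨φ (h' : G)⁻¹, ?_⟩⟩, ?_⟩
      · obtain ⟨n, hn⟩ := h'.2
        exact ⟨-n, by simp [← hn, ← map_zpow]⟩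
      · simp only
        rw [hh']
        simp [mul_assoc]
    exact Set.Finite.subset (Set.finite_range _) this
  refine ⟨hfo, ?_, ?_, ?_⟩
  · -- finite index in the image
    have hmap : (Subgroup.zpowers t).map φ.rangeRestrict =
        (Subgroup.zpowers (φ t)).subgroupOf φ.range := by
      ext ⟨x, hx⟩
      simp only [Subgroup.mem_subgroupOf, Subgroup.mem_map, Subgroup.mem_zpowers_iff]
      constructor
      · rintro ⟨g, ⟨n, rfl⟩, heq⟩
        exact ⟨n, by simpa [← map_zpow] using congrArg Subtype.val heq⟩
      · rintro ⟨n, hn⟩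
        exact ⟨t ^ n, ⟨n, rfl⟩, by ext; simpa [← map_zpow] using hn⟩
    rw [← hmap]
    intro h0
    have hdvd := (Subgroup.zpowers t).index_map_dvd φ.rangeRestrict_surjective
    rw [h0] at hdvd
    exact hindex (Nat.eq_zero_of_zero_dvd hdvd)
  · simpa using congrArg φ hδ
  · intro h
    apply hfo
    refine isOfFinOrder_iff_pow_eq_one.2 ⟨2, two_pos, ?_⟩
    rw [pow_two]
    nth_rewrite 2 [← h]
    exact mul_inv_cancel _
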